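/- arXiv:math/0611909 — 3 statements merged into one kernel-verified Lean document; each statement's English description precedes it below -/
import Mathlib

section
/- Let f and g be global spacelike solutions that are positive on all of ℝ and whose first integrals satisfy C_f < C_g ≤ 1. Then: (a) for every t ∈ ℝ with f(t) < g(t) one has |f'(t)| < |g'(t)|; (b) if f'(t₀) = g'(t₀) for some t₀ ∈ ℝ, then f(t₀) − g(t₀) > 0, f(t) − g(t) ≥ f(t₀) − g(t₀) for all t ∈ ℝ, f'(t) > g'(t) for all t > t₀, and f'(t) < g'(t) for all t < t₀. -/
open Real Filter

/-- A global spacelike solution: a `C²` function `f : ℝ → ℝ` with `|f'| < 1` and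
`f'' = f^(n-1) (1 - f'^2)^((n+2)/2)` on all of `ℝ`. -/
def IsGSS (n : ℕ) (f : ℝ → ℝ) : Prop :=
  ContDiff ℝ 2 f ∧
  ∀ t : ℝ, |deriv f t| < 1 ∧
    deriv (deriv f) t = f t ^ (n - 1) * (1 - (deriv f t) ^ 2) ^ ((n + 2 : ℝ) / 2)

/-- The first integral `C_f = (1 - f'(0)²)^(-n/2) - f(0)^n` of a global spacelike
solution (this quantity is independent of the point where it is evaluated). -/
noncomputable def firstIntegral (n : ℕ) (f : ℝ → ℝ) : ℝ :=
  (1 - (deriv f 0) ^ 2) ^ (-(n : ℝ) / 2) - f 0 ^ n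

/- ========== auxiliary lemmas ========== -/

lemma IsGSS.regular {n : ℕ} {f : ℝ → ℝ} (hf : IsGSS n f) :
    Differentiable ℝ f ∧ Differentiable ℝ (deriv f) ∧ Continuous (deriv (deriv f)) := by
  have h := hf.1
  rw [show (2 : WithTop ℕ∞) = 1 + 1 from rfl, contDiff_succ_iff_deriv] at h
  obtain ⟨hd, -, h1⟩ := h
  rw [contDiff_one_iff_deriv] at h1
  exact ⟨hd, h1.1, h1.2⟩

lemma IsGSS.upos {n : ℕ} {f : ℝ → ℝ} (hf : IsGSS n f) (t : ℝ) :
    0 < 1 - (deriv f t) ^ 2 := by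
  have h := abs_lt.mp (hf.2 t).1
  nlinarith [h.1, h.2]

/-- The conservation law: the first integral is indeed constant. -/
lemma conserved {n : ℕ} {f : ℝ → ℝ} (hf : IsGSS n f) (t : ℝ) :
    (1 - (deriv f t) ^ 2) ^ (-(n : ℝ) / 2) - f t ^ n = firstIntegral n f := by
  obtain ⟨hdf, hdf', -⟩ := hf.regular
  have key : ∀ s : ℝ, HasDerivAt
      (fun x => (1 - (deriv f x) ^ 2) ^ (-(n : ℝ) / 2) - f x ^ n) 0 s := by
    intro s
    have h1 : HasDerivAt f (deriv f s) s := (hdf s).hasDerivAt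
    have h2 : HasDerivAt (deriv f) (deriv (deriv f) s) s := (hdf' s).hasDerivAt
    have h3 : HasDerivAt (fun x => 1 - (deriv f x) ^ 2)
        (0 - (2 * deriv f s ^ (2 - 1) * deriv (deriv f) s)) s :=
      (hasDerivAt_const s (1 : ℝ)).sub (h2.pow 2)
    have h4 := h3.rpow_const (p := -(n : ℝ) / 2) (Or.inl (hf.upos s).ne')
    have h5 := h1.pow n
    have h6 := h4.sub h5
    refine h6.congr_deriv (Eq.symm ?_)
    rw [(hf.2 s).2]
    have e1 : (1 - deriv f s ^ 2) ^ ((n + 2 : ℝ) / 2) *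
        (1 - deriv f s ^ 2) ^ (-(n : ℝ) / 2 - 1) = 1 := by
      rw [← Real.rpow_add (hf.upos s),
        show ((n : ℝ) + 2) / 2 + (-(n : ℝ) / 2 - 1) = 0 by ring, Real.rpow_zero]
    linear_combination (-(n : ℝ) * deriv f s * f s ^ (n - 1)) * e1
  have hd : Differentiable ℝ (fun x => (1 - (deriv f x) ^ 2) ^ (-(n : ℝ) / 2) - f x ^ n) :=
    fun s => (key s).differentiableAt
  have h0 := is_const_of_deriv_eq_zero hd (fun s => (key s).deriv) t 0
  simpa [firstIntegral] using h0

/-- If `A_f < A_g` (pointwise) then `|f'| < |g'|`. -/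
lemma sq_deriv_lt {n : ℕ} {f g : ℝ → ℝ} (hf : IsGSS n f) (hg : IsGSS n g) (t : ℝ)
    (h : (1 - (deriv f t) ^ 2) ^ (-(n : ℝ) / 2) < (1 - (deriv g t) ^ 2) ^ (-(n : ℝ) / 2)) :
    |deriv f t| < |deriv g t| := by
  have hineq : 1 - (deriv g t) ^ 2 < 1 - (deriv f t) ^ 2 := by
    by_contra hc
    push_neg at hc
    have hz : -(n : ℝ) / 2 ≤ 0 := by
      have : (0 : ℝ) ≤ (n : ℝ) := Nat.cast_nonneg n
      linarith
    exact absurd (Real.rpow_le_rpow_of_nonpos (hf.upos t) hc hz) (not_le.mpr h)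
  have hsq : (deriv f t) ^ 2 < (deriv g t) ^ 2 := by linarith
  have : |deriv f t| ^ 2 < |deriv g t| ^ 2 := by
    rwa [sq_abs, sq_abs]
  exact lt_of_pow_lt_pow_left₀ 2 (abs_nonneg _) this

/-- Core sign lemma: if `φ` is continuous, strictly increasing near each of its
zeros, and vanishes at `t₀`, then `φ > 0` to the right of `t₀`. -/
lemma sign_right {φ : ℝ → ℝ} (hc : Continuous φ)
    (H : ∀ t, φ t = 0 → ∃ ε > 0, StrictMonoOn φ (Set.Ioo (t - ε) (t + ε)))
    {t₀ : ℝ} (h0 : φ t₀ = 0) : ∀ t, t₀ < t → 0 < φ t := by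
  intro t₁ ht₁
  by_contra hle
  push_neg at hle
  obtain ⟨ε₀, hε₀, hmono₀⟩ := H t₀ h0
  set s := min (t₀ + ε₀ / 2) ((t₀ + t₁) / 2) with hs
  have hst₀ : t₀ < s := lt_min (by linarith) (by linarith)
  have hst₁ : s < t₁ := min_lt_of_right_lt (by linarith)
  have hφs : 0 < φ s := by
    have h1 : t₀ ∈ Set.Ioo (t₀ - ε₀) (t₀ + ε₀) := ⟨by linarith, by linarith⟩
    have h2 : s ∈ Set.Ioo (t₀ - ε₀) (t₀ + ε₀) :=
      ⟨by linarith, lt_of_le_of_lt (min_le_left _ _) (by linarith)⟩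
    have := hmono₀ h1 h2 hst₀
    rwa [h0] at this
  set S := Set.Icc s t₁ ∩ {x | φ x ≤ 0} with hS
  have hne : S.Nonempty := ⟨t₁, ⟨hst₁.le, le_refl _⟩, hle⟩
  have hbdd : BddBelow S := ⟨s, fun x hx => hx.1.1⟩
  have hcl : IsClosed S := isClosed_Icc.inter (isClosed_le hc continuous_const)
  set t₂ := sInf S with ht₂
  have ht₂S : t₂ ∈ S := hcl.csInf_mem hne hbdd
  have hpos_lt : ∀ x, s ≤ x → x < t₂ → 0 < φ x := by
    intro x hsx hxt
    by_contra hx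
    push_neg at hx
    have hxS : x ∈ S := ⟨⟨hsx, hxt.le.trans ht₂S.1.2⟩, hx⟩
    exact absurd (csInf_le hbdd hxS) (not_le.mpr hxt)
  have hst₂ : s < t₂ := by
    rcases lt_or_ge s t₂ with h | h
    · exact h
    · have : t₂ = s := le_antisymm h ht₂S.1.1
      rw [this] at ht₂S
      exact absurd ht₂S.2 (not_le.mpr hφs)
  have hφt₂0 : φ t₂ = 0 := by
    refine le_antisymm ht₂S.2 ?_
    have htend : Tendsto φ (nhdsWithin t₂ (Set.Iio t₂)) (nhds (φ t₂)) :=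
      (hc.tendsto t₂).mono_left nhdsWithin_le_nhds
    refine ge_of_tendsto htend ?_
    filter_upwards [Ioo_mem_nhdsLT_of_mem ⟨hst₂, le_refl t₂⟩] with x hx
    exact (hpos_lt x hx.1.le hx.2).le
  obtain ⟨ε, hε, hmono⟩ := H t₂ hφt₂0
  set t₃ := max ((s + t₂) / 2) (t₂ - ε / 2) with ht₃
  have h3lt : t₃ < t₂ := max_lt (by linarith) (by linarith)
  have h3mem : t₃ ∈ Set.Ioo (t₂ - ε) (t₂ + ε) :=
    ⟨lt_of_lt_of_le (by linarith) (le_max_right _ _), by linarith⟩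
  have h2mem : t₂ ∈ Set.Ioo (t₂ - ε) (t₂ + ε) := ⟨by linarith, by linarith⟩
  have hlt := hmono h3mem h2mem h3lt
  rw [hφt₂0] at hlt
  have hs3 : s ≤ t₃ := le_trans (by linarith) (le_max_left _ _)
  exact absurd hlt (not_lt.mpr (hpos_lt t₃ hs3 h3lt).le)

/-- Reflected version: `φ < 0` to the left of `t₀`. -/
lemma sign_left {φ : ℝ → ℝ} (hc : Continuous φ)
    (H : ∀ t, φ t = 0 → ∃ ε > 0, StrictMonoOn φ (Set.Ioo (t - ε) (t + ε)))
    {t₀ : ℝ} (h0 : φ t₀ = 0) : ∀ t, t < t₀ → φ t < 0 := by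
  intro t ht
  have key := sign_right (φ := fun s => -φ (-s))
    ((hc.comp continuous_neg).neg)
    (fun u hu => by
      have hu' : φ (-u) = 0 := by simpa using hu
      obtain ⟨ε, hε, hmono⟩ := H (-u) hu'
      refine ⟨ε, hε, fun x hx y hy hxy => ?_⟩
      have hx' : -x ∈ Set.Ioo (-u - ε) (-u + ε) := ⟨by simp at hx ⊢; linarith [hx.1, hx.2],
        by simp at hx ⊢; linarith [hx.1, hx.2]⟩
      have hy' : -y ∈ Set.Ioo (-u - ε) (-u + ε) := ⟨by simp at hy ⊢; linarith [hy.1, hy.2],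
        by simp at hy ⊢; linarith [hy.1, hy.2]⟩
      have := hmono hy' hx' (by linarith)
      simpa using this)
    (t₀ := -t₀) (by simpa using h0) (-t) (by linarith)
  simpa using key

/-- comparison of positive global spacelike solutions with
`C_f < C_g ≤ 1`. -/
theorem stmt_10 (n : ℕ) (hn : 2 ≤ n) (f g : ℝ → ℝ)
    (hf : IsGSS n f) (hg : IsGSS n g)
    (hfpos : ∀ t : ℝ, 0 < f t) (hgpos : ∀ t : ℝ, 0 < g t)
    (hfg : firstIntegral n f < firstIntegral n g)
    (hg1 : firstIntegral n g ≤ 1) :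
    (∀ t : ℝ, f t < g t → |deriv f t| < |deriv g t|) ∧
    (∀ t₀ : ℝ, deriv f t₀ = deriv g t₀ →
      0 < f t₀ - g t₀ ∧
      (∀ t : ℝ, f t₀ - g t₀ ≤ f t - g t) ∧
      (∀ t : ℝ, t₀ < t → deriv g t < deriv f t) ∧
      (∀ t : ℝ, t < t₀ → deriv f t < deriv g t)) := by
  obtain ⟨hdf, hdf', hddf⟩ := hf.regular
  obtain ⟨hdg, hdg', hddg⟩ := hg.regular
  -- part (a)
  have parta : ∀ t : ℝ, f t < g t → |deriv f t| < |deriv g t| := by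
    intro t ht
    apply sq_deriv_lt hf hg t
    have h1 := conserved hf t
    have h2 := conserved hg t
    have h3 : f t ^ n < g t ^ n := pow_lt_pow_left₀ ht (hfpos t).le (by omega)
    linarith
  -- key: equal derivatives force `g < f`
  have key : ∀ t : ℝ, deriv f t = deriv g t → g t < f t := by
    intro t ht
    have h1 := conserved hf t
    have h2 := conserved hg t
    rw [ht] at h1
    have h3 : g t ^ n < f t ^ n := by linarith
    exact lt_of_pow_lt_pow_left₀ n (hfpos t).le h3
  -- the difference of derivatives
  set φ : ℝ → ℝ := fun t => deriv f t - deriv g t with hφdef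
  have hφc : Continuous φ := (hdf'.continuous).sub (hdg'.continuous)
  have hφderiv : ∀ x, deriv φ x = deriv (deriv f) x - deriv (deriv g) x := by
    intro x
    exact deriv_sub (hdf' x) (hdg' x)
  have H : ∀ t, φ t = 0 → ∃ ε > 0, StrictMonoOn φ (Set.Ioo (t - ε) (t + ε)) := by
    intro t ht
    have heq : deriv f t = deriv g t := by
      have : deriv f t - deriv g t = 0 := ht
      linarith
    have hgf : g t < f t := key t heq
    set ψ : ℝ → ℝ := fun x => deriv (deriv f) x - deriv (deriv g) x with hψdef
    have hψc : Continuous ψ := hddf.sub hddg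
    have hψt : 0 < ψ t := by
      have e1 := (hf.2 t).2
      have e2 := (hg.2 t).2
      simp only [hψdef]
      rw [e1, e2, heq]
      have hpow : g t ^ (n - 1) < f t ^ (n - 1) :=
        pow_lt_pow_left₀ hgf (hgpos t).le (by omega)
      have hrpos : (0 : ℝ) < (1 - deriv g t ^ 2) ^ ((n + 2 : ℝ) / 2) :=
        Real.rpow_pos_of_pos (hg.upos t) _
      nlinarith
    have hev : ∀ᶠ x in nhds t, 0 < ψ x :=
      (hψc.tendsto t).eventually (eventually_gt_nhds hψt)
    obtain ⟨ε, hε, hball⟩ := Metric.eventually_nhds_iff.mp hev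
    refine ⟨ε, hε, ?_⟩
    apply strictMonoOn_of_deriv_pos (convex_Ioo _ _) hφc.continuousOn
    intro x hx
    rw [interior_Ioo] at hx
    rw [hφderiv x]
    apply hball
    rw [Real.dist_eq, abs_lt]
    exact ⟨by linarith [hx.1], by linarith [hx.2]⟩
  -- assemble part (b)
  refine ⟨parta, fun t₀ ht₀ => ?_⟩
  have hφ0 : φ t₀ = 0 := by simp [hφdef, ht₀]
  have hright : ∀ t, t₀ < t → 0 < φ t := sign_right hφc H hφ0
  have hleft : ∀ t, t < t₀ → φ t < 0 := sign_left hφc H hφ0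
  have hdh : ∀ x, deriv (fun t => f t - g t) x = φ x := by
    intro x
    exact deriv_sub (hdf x) (hdg x)
  have hhc : Continuous (fun t => f t - g t) := (hdf.continuous).sub (hdg.continuous)
  refine ⟨by linarith [key t₀ ht₀], ?_, fun t ht => by have := hright t ht; simp [hφdef] at this; linarith,
    fun t ht => by have := hleft t ht; simp [hφdef] at this; linarith⟩
  intro t
  rcases lt_trichotomy t t₀ with h | h | h
  · have hanti : StrictAntiOn (fun t => f t - g t) (Set.Iic t₀) := by
      apply strictAntiOn_of_deriv_neg (convex_Iic _) hhc.continuousOn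
      intro x hx
      rw [interior_Iic] at hx
      rw [hdh x]
      exact hleft x hx
    exact (hanti (Set.mem_Iic.mpr h.le) (Set.mem_Iic.mpr (le_refl _)) h).le
  · rw [h]
  · have hmono : StrictMonoOn (fun t => f t - g t) (Set.Ici t₀) := by
      apply strictMonoOn_of_deriv_pos (convex_Ici _) hhc.continuousOn
      intro x hx
      rw [interior_Ici] at hx
      rw [hdh x]
      exact hright x hx
    exact (hmono (Set.mem_Ici.mpr (le_refl _)) (Set.mem_Ici.mpr h.le) h).le
end

section
/- Let u_c*(y) := sup_{x ∈ ℝⁿ} (⟨x, y⟩ − u_c(x)) denote the Legendre transform of u_c. If c < 1, then for every y = (y₁, ȳ) ∈ ℝⁿ with |y| = 1 one has u_c*(y) = λ_c·|y₁|. If c = 1, then for every y = (y₁, ȳ) in the topological boundary of the half-ball B₁⁺(0) = {y ∈ ℝⁿ : |y| < 1 and y₁ > 0} one has u_1*(y) = λ_1·y₁. -/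
open Real Filter

/-- `IsFc n c f` says that `f` is the normalized global spacelike solution `f_c`:
for `c < 1` it satisfies `f 0 = (1-c)^(1/n)`, `f' 0 = 0` (so its first integral is `c`);
for `c = 1` it satisfies `f 0 = 1`, `f' 0 = √(1 - 2^(-2/n))` (first integral `1`,
and `f` is strictly increasing). -/
def IsFc (n : ℕ) (c : ℝ) (f : ℝ → ℝ) : Prop :=
  IsGSS n f ∧
  (c < 1 → f 0 = (1 - c) ^ ((1 : ℝ) / n) ∧ deriv f 0 = 0) ∧
  (c = 1 → f 0 = 1 ∧ deriv f 0 = Real.sqrt (1 - (2 : ℝ) ^ (-(2 : ℝ) / n)))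

/-- The rotationally symmetric function `u_c(x) = √(f_c(x₁)² + |x̄|²)` on `ℝⁿ`
(written using `|x̄|² = ‖x‖² - x₁²`). -/
noncomputable def uC (n : ℕ) (f : ℝ → ℝ) (x : EuclideanSpace ℝ (Fin (n + 2))) : ℝ :=
  Real.sqrt (f (x 0) ^ 2 + ‖x‖ ^ 2 - (x 0) ^ 2)


section Aux
open Set

private lemma sqrtlim (K : ℝ) (hK : 0 ≤ K) :
    Tendsto (fun s : ℝ => Real.sqrt (K + s ^ 2) - s) atTop (nhds 0) := by
  apply squeeze_zero' (g := fun s => K / s)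
  · filter_upwards [eventually_gt_atTop 0] with s hs
    have h1 : s ≤ Real.sqrt (K + s ^ 2) := by
      nth_rewrite 1 [show s = Real.sqrt (s ^ 2) by rw [Real.sqrt_sq hs.le]]
      exact Real.sqrt_le_sqrt (by linarith)
    linarith
  · filter_upwards [eventually_gt_atTop 0] with s hs
    have h2 : Real.sqrt (K + s ^ 2) ≤ s + K / s := by
      rw [show s + K / s = Real.sqrt ((s + K / s) ^ 2) from (Real.sqrt_sq (by positivity)).symm]
      apply Real.sqrt_le_sqrt
      have he : (s + K / s) ^ 2 = s ^ 2 + 2 * K + (K / s) ^ 2 := by field_simp; ring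
      nlinarith [sq_nonneg (K / s)]
    linarith
  · exact tendsto_const_nhds.div_atTop tendsto_id

private lemma supeq {α : Type*} [Nonempty α] (g : α → ℝ) (a : ℝ) (hub : ∀ x, g x ≤ a)
    {v : ℝ → α} (hv : Tendsto (fun t => g (v t)) atTop (nhds a)) :
    sSup (Set.range g) = a := by
  have hb : BddAbove (Set.range g) := ⟨a, by rintro _ ⟨x, rfl⟩; exact hub x⟩
  refine le_antisymm (csSup_le (Set.range_nonempty g) (by rintro _ ⟨x, rfl⟩; exact hub x)) ?_
  exact le_of_tendsto hv (Filter.Eventually.of_forall fun t => le_csSup hb ⟨v t, rfl⟩)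

private lemma cs2 {a b s m : ℝ} (ha : 0 ≤ a) (hb : 0 ≤ b) (hs : 0 ≤ s) (hm : 0 ≤ m)
    (hab : a ^ 2 + b ^ 2 = 1) : a * s + b * m ≤ Real.sqrt (m ^ 2 + s ^ 2) := by
  rw [show a * s + b * m = Real.sqrt ((a * s + b * m) ^ 2) from
    (Real.sqrt_sq (by positivity)).symm]
  apply Real.sqrt_le_sqrt
  nlinarith [sq_nonneg (b * s - a * m)]

variable {m : ℕ}

private lemma normsq (x : EuclideanSpace ℝ (Fin (m + 2))) : ‖x‖ ^ 2 = ∑ i, x i ^ 2 := by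
  rw [EuclideanSpace.norm_eq, Real.sq_sqrt (Finset.sum_nonneg fun i _ => sq_nonneg _)]
  simp [sq_abs]

private lemma innereq (x y : EuclideanSpace ℝ (Fin (m + 2))) :
    (inner ℝ x y : ℝ) = ∑ i, x i * y i := by
  simp [PiLp.inner_apply, RCLike.inner_apply, mul_comm]

private lemma coordsq_le (x : EuclideanSpace ℝ (Fin (m + 2))) : x 0 ^ 2 ≤ ‖x‖ ^ 2 := by
  rw [normsq]
  exact Finset.single_le_sum (f := fun i => x i ^ 2) (fun i _ => sq_nonneg _) (Finset.mem_univ 0)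

private lemma tail_sum (x : EuclideanSpace ℝ (Fin (m + 2))) :
    ∑ i ∈ Finset.univ.erase 0, x i ^ 2 = ‖x‖ ^ 2 - x 0 ^ 2 := by
  rw [normsq, ← Finset.sum_erase_add _ _ (Finset.mem_univ 0)]; ring

private lemma inner_le (x y : EuclideanSpace ℝ (Fin (m + 2))) :
    (inner ℝ x y : ℝ) ≤ x 0 * y 0 +
      Real.sqrt (‖x‖ ^ 2 - x 0 ^ 2) * Real.sqrt (‖y‖ ^ 2 - y 0 ^ 2) := by
  rw [innereq, ← Finset.sum_erase_add _ _ (Finset.mem_univ 0), add_comm]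
  gcongr
  calc ∑ i ∈ Finset.univ.erase 0, x i * y i
      ≤ Real.sqrt (∑ i ∈ Finset.univ.erase 0, x i ^ 2) *
        Real.sqrt (∑ i ∈ Finset.univ.erase 0, y i ^ 2) :=
        Real.sum_mul_le_sqrt_mul_sqrt _ _ _
    _ = _ := by rw [tail_sum, tail_sum]

private noncomputable def wit (p r : ℝ) (y : EuclideanSpace ℝ (Fin (m + 2))) :
    EuclideanSpace ℝ (Fin (m + 2)) :=
  (WithLp.equiv 2 (Fin (m + 2) → ℝ)).symm (fun i => if i = 0 then p else r * y i)

private lemma wit_zero (p r : ℝ) (y : EuclideanSpace ℝ (Fin (m + 2))) : wit p r y 0 = p := by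
  simp [wit]

private lemma wit_inner (p r : ℝ) (y : EuclideanSpace ℝ (Fin (m + 2))) :
    (inner ℝ (wit p r y) y : ℝ) = p * y 0 + r * (‖y‖ ^ 2 - y 0 ^ 2) := by
  rw [innereq, ← Finset.sum_erase_add _ _ (Finset.mem_univ 0), wit_zero, ← tail_sum,
    Finset.mul_sum, add_comm]
  congr 1
  apply Finset.sum_congr rfl
  intro i hi
  have : i ≠ 0 := Finset.ne_of_mem_erase hi
  simp [wit, this]
  ring

private lemma wit_normsq (p r : ℝ) (y : EuclideanSpace ℝ (Fin (m + 2))) :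
    ‖wit p r y‖ ^ 2 = p ^ 2 + r ^ 2 * (‖y‖ ^ 2 - y 0 ^ 2) := by
  rw [normsq, ← Finset.sum_erase_add _ _ (Finset.mem_univ 0), wit_zero, ← tail_sum,
    Finset.mul_sum, add_comm]
  congr 1
  apply Finset.sum_congr rfl
  intro i hi
  have : i ≠ 0 := Finset.ne_of_mem_erase hi
  simp [wit, this]
  ring

variable {N : ℕ} {f : ℝ → ℝ}

private lemma gss_hd1 (hf : IsGSS N f) (t : ℝ) : HasDerivAt f (deriv f t) t :=
  ((hf.1.differentiable (by norm_num)) t).hasDerivAt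

private lemma gss_cd1 (hf : IsGSS N f) : ContDiff ℝ 1 (deriv f) := by
  have h := hf.1
  rw [show (2 : WithTop ℕ∞) = 1 + 1 by norm_num, contDiff_succ_iff_deriv] at h
  exact h.2.2

private lemma gss_hd2 (hf : IsGSS N f) (t : ℝ) : HasDerivAt (deriv f) (deriv (deriv f) t) t :=
  (((gss_cd1 hf).differentiable (by norm_num)) t).hasDerivAt

private lemma gss_q2 (hf : IsGSS N f) (t : ℝ) : 0 < 1 - deriv f t ^ 2 := by
  have h := (hf.2 t).1
  have : deriv f t ^ 2 < 1 := (sq_lt_one_iff_abs_lt_one _).2 h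
  linarith

private lemma gss_E (hf : IsGSS N f) (t : ℝ) :
    HasDerivAt (fun t => (1 - deriv f t ^ 2) ^ (-(N : ℝ) / 2) - f t ^ N) 0 t := by
  have h1 : HasDerivAt (fun t => 1 - deriv f t ^ 2)
      (-(2 * deriv f t * deriv (deriv f) t)) t := by
    have := ((gss_hd2 hf t).pow 2).const_sub 1
    simpa using this
  have h2 : HasDerivAt (fun t => (1 - deriv f t ^ 2) ^ (-(N : ℝ) / 2))
      (-(2 * deriv f t * deriv (deriv f) t) * (-(N : ℝ) / 2) *
        (1 - deriv f t ^ 2) ^ (-(N : ℝ) / 2 - 1)) t :=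
    h1.rpow_const (Or.inl (gss_q2 hf t).ne')
  have h3 : HasDerivAt (fun t => f t ^ N) ((N : ℝ) * f t ^ (N - 1) * deriv f t) t :=
    (gss_hd1 hf t).pow N
  have : HasDerivAt (fun t => (1 - deriv f t ^ 2) ^ (-(N : ℝ) / 2) - f t ^ N) _ t := h2.sub h3
  convert this using 1
  rw [(hf.2 t).2]
  have hkey : (1 - deriv f t ^ 2) ^ ((N + 2 : ℝ) / 2) *
      (1 - deriv f t ^ 2) ^ (-(N : ℝ) / 2 - 1) = 1 := by
    rw [← Real.rpow_add (gss_q2 hf t)]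
    rw [show (N + 2 : ℝ) / 2 + (-(N : ℝ) / 2 - 1) = 0 by ring, Real.rpow_zero]
  linear_combination (-(N : ℝ) * deriv f t * f t ^ (N - 1)) * hkey

private lemma gss_E_const (hf : IsGSS N f) (t : ℝ) :
    (1 - deriv f t ^ 2) ^ (-(N : ℝ) / 2) - f t ^ N =
    (1 - deriv f 0 ^ 2) ^ (-(N : ℝ) / 2) - f 0 ^ N :=
  is_const_of_deriv_eq_zero (fun s => (gss_E hf s).differentiableAt)
    (fun s => (gss_E hf s).deriv) t 0

variable {c : ℝ}

private lemma fc_E (hc : c ≤ 1) (hN : 2 ≤ N) (hf : IsFc N c f) (t : ℝ) :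
    (1 - deriv f t ^ 2) ^ (-(N : ℝ) / 2) = c + f t ^ N := by
  have hN0 : (N : ℝ) ≠ 0 := by positivity
  have hE := gss_E_const hf.1 t
  have hE0 : (1 - deriv f 0 ^ 2) ^ (-(N : ℝ) / 2) - f 0 ^ N = c := by
    rcases eq_or_lt_of_le hc with heq | hlt
    · obtain ⟨h0, h0'⟩ := hf.2.2 heq
      have hexp : (-(2 : ℝ)) / N ≤ 0 := by
        rw [neg_div]; exact neg_nonpos.mpr (div_nonneg (by norm_num) (Nat.cast_nonneg N))
      have hle : (2 : ℝ) ^ (-(2 : ℝ) / N) ≤ 1 :=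
        Real.rpow_le_one_of_one_le_of_nonpos one_le_two hexp
      have q0 : deriv f 0 ^ 2 = 1 - 2 ^ (-(2 : ℝ) / N) := by
        rw [h0', Real.sq_sqrt (by linarith)]
      rw [h0, q0, heq, show (1 : ℝ) - (1 - 2 ^ (-(2 : ℝ) / N)) = 2 ^ (-(2 : ℝ) / N) by ring,
        ← Real.rpow_mul (by norm_num : (0 : ℝ) ≤ 2),
        show (-(2 : ℝ) / N) * (-(N : ℝ) / 2) = 1 by field_simp,
        Real.rpow_one, one_pow]
      norm_num
    · obtain ⟨h0, h0'⟩ := hf.2.1 hlt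
      rw [h0, h0', show (1 : ℝ) - 0 ^ 2 = 1 by norm_num, Real.one_rpow,
        ← Real.rpow_natCast ((1 - c) ^ ((1 : ℝ) / N)) N,
        ← Real.rpow_mul (by linarith : (0 : ℝ) ≤ 1 - c), one_div,
        inv_mul_cancel₀ hN0, Real.rpow_one]
      ring
  linarith [hE, hE0]

private lemma vecF_contDiffAt (k : ℕ) (e : ℝ) {x : ℝ × ℝ} (hx : x.2 ^ 2 < 1) :
    ContDiffAt ℝ 1 (fun x : ℝ × ℝ => (x.2, x.1 ^ k * (1 - x.2 ^ 2) ^ e)) x :=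
  ContDiffAt.prodMk contDiffAt_snd <|
    (contDiffAt_fst.pow k).mul
      ((contDiffAt_const.sub (contDiffAt_snd.pow 2)).rpow_const_of_ne (by nlinarith))

private lemma ode_unique (k : ℕ) (e : ℝ) {α β : ℝ → ℝ × ℝ}
    (hα : ∀ t, HasDerivAt α ((α t).2, (α t).1 ^ k * (1 - (α t).2 ^ 2) ^ e) t)
    (hα2 : ∀ t, (α t).2 ^ 2 < 1)
    (hβ : ∀ t, HasDerivAt β ((β t).2, (β t).1 ^ k * (1 - (β t).2 ^ 2) ^ e) t)
    (hβ2 : ∀ t, (β t).2 ^ 2 < 1)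
    {t₀ : ℝ} (h0 : α t₀ = β t₀) (t : ℝ) : α t = β t := by
  have hαd : Differentiable ℝ α := fun s => (hα s).differentiableAt
  have hβd : Differentiable ℝ β := fun s => (hβ s).differentiableAt
  have hαc : Continuous α := hαd.continuous
  have hβc : Continuous β := hβd.continuous
  set F : ℝ × ℝ → ℝ × ℝ := fun x => (x.2, x.1 ^ k * (1 - x.2 ^ 2) ^ e) with hF
  set S := {s : ℝ | α s = β s} with hS
  have hclosed : IsClosed S := isClosed_eq hαc hβc
  have hopen : IsOpen S := by
    rw [isOpen_iff_mem_nhds]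
    intro t₁ ht₁
    obtain ⟨K, U, hU, hlip⟩ := (vecF_contDiffAt k e (hα2 t₁)).exists_lipschitzOnWith
    have heq : α t₁ = β t₁ := ht₁
    have hev := ODE_solution_unique_of_eventually (v := fun _ : ℝ => F)
      (s := fun _ : ℝ => U) (K := K) (Filter.Eventually.of_forall fun _ => hlip) ?_ ?_ heq
    · exact hev
    · filter_upwards [hαc.continuousAt.preimage_mem_nhds hU] with s hs
      exact ⟨hα s, hs⟩
    · have hU' : U ∈ nhds (β t₁) := heq ▸ hU
      filter_upwards [hβc.continuousAt.preimage_mem_nhds hU'] with s hs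
      exact ⟨hβ s, hs⟩
  have huniv : S = univ :=
    ((isClopen_iff.mp ⟨hclosed, hopen⟩).resolve_left (Nonempty.ne_empty ⟨t₀, h0⟩))
  have : t ∈ S := huniv ▸ mem_univ t
  exact this

private lemma fc_ge (hc : c ≤ 1) (hN : 2 ≤ N) (hf : IsFc N c f) (t : ℝ) :
    1 - c ≤ f t ^ N := by
  have h1 : (1 : ℝ) ≤ (1 - deriv f t ^ 2) ^ (-(N : ℝ) / 2) :=
    Real.one_le_rpow_of_pos_of_le_one_of_nonpos (gss_q2 hf.1 t)
      (by nlinarith [sq_nonneg (deriv f t)])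
      (by rw [neg_div]; exact neg_nonpos.mpr (by positivity))
  linarith [fc_E hc hN hf t]

private lemma fc_inv (hc : c ≤ 1) (hN : 2 ≤ N) (hf : IsFc N c f) (t : ℝ) :
    1 - deriv f t ^ 2 = (c + f t ^ N) ^ (-(2 : ℝ) / N) := by
  have hq := gss_q2 hf.1 t
  have h := fc_E hc hN hf t
  rw [← h, ← Real.rpow_mul hq.le,
    show -(N : ℝ) / 2 * (-(2 : ℝ) / N) = 1 by
      have hN0 : (N : ℝ) ≠ 0 := Nat.cast_ne_zero.mpr (by omega)
      field_simp,
    Real.rpow_one]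

private lemma gss_traj (hf : IsGSS N f) (t : ℝ) :
    HasDerivAt (fun s => (f s, deriv f s))
      (((f t, deriv f t) : ℝ × ℝ).2,
        ((f t, deriv f t) : ℝ × ℝ).1 ^ (N - 1) *
          (1 - ((f t, deriv f t) : ℝ × ℝ).2 ^ 2) ^ ((N + 2 : ℝ) / 2)) t :=
  (gss_hd1 hf t).prodMk ((hf.2 t).2 ▸ gss_hd2 hf t)

private lemma gss_q2' (hf : IsGSS N f) (t : ℝ) : deriv f t ^ 2 < 1 :=
  (sq_lt_one_iff_abs_lt_one _).2 (hf.2 t).1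

private lemma fc1_ne (hN : 2 ≤ N) (hf : IsFc N 1 f) (t : ℝ) :
    ¬(f t = 0 ∧ deriv f t = 0) := by
  rintro ⟨h1, h2⟩
  have hz := ode_unique (N - 1) ((N + 2 : ℝ) / 2) (α := fun s => (f s, deriv f s))
    (β := fun _ => ((0 : ℝ), (0 : ℝ))) (gss_traj hf.1) (fun u => gss_q2' hf.1 u)
    (fun u => by
      exact (hasDerivAt_const u ((0 : ℝ), (0 : ℝ))).congr_deriv
        (by simp [zero_pow (Nat.sub_ne_zero_of_lt hN)]; rfl))
    (fun u => by norm_num) (t₀ := t)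
    (by show (f t, deriv f t) = ((0 : ℝ), (0 : ℝ)); rw [h1, h2]) 0
  have hz0 : f 0 = 0 := congrArg Prod.fst hz
  rw [(hf.2.2 rfl).1] at hz0
  norm_num at hz0

private lemma fc1_dpos (hN : 2 ≤ N) (hf : IsFc N 1 f) (t : ℝ) : 0 < deriv f t := by
  have hNR : (0 : ℝ) < N := by positivity
  have h0 : 0 < deriv f 0 := by
    rw [(hf.2.2 rfl).2]
    apply Real.sqrt_pos.mpr
    have h2 : (2 : ℝ) ^ (-(2 : ℝ) / N) < 1 :=
      Real.rpow_lt_one_of_one_lt_of_neg one_lt_two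
        (by rw [neg_div]; exact neg_neg_iff_pos.mpr (by positivity))
    linarith
  have hne : ∀ s, deriv f s ≠ 0 := by
    intro s hs
    have hE := fc_E le_rfl hN hf s
    rw [hs] at hE
    norm_num [Real.one_rpow] at hE
    exact fc1_ne hN hf s ⟨hE.1, hs⟩
  by_contra hle
  push_neg at hle
  have hcont : ContinuousOn (deriv f) (uIcc t 0) := (gss_cd1 hf.1).continuous.continuousOn
  have hmem : (0 : ℝ) ∈ uIcc (deriv f t) (deriv f 0) := mem_uIcc.mpr (Or.inl ⟨hle, h0.le⟩)
  obtain ⟨z, _, hz⟩ := intermediate_value_uIcc hcont hmem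
  exact hne z hz

private lemma fc1_pos (hN : 2 ≤ N) (hf : IsFc N 1 f) (t : ℝ) : 0 < f t := by
  have hne : ∀ s, f s ≠ 0 := by
    intro s hs
    have hinv := fc_inv le_rfl hN hf s
    rw [hs, zero_pow (by omega), add_zero, Real.one_rpow] at hinv
    have : deriv f s = 0 := by nlinarith [hinv]
    exact (fc1_dpos hN hf s).ne' this
  have h0 : 0 < f 0 := by rw [(hf.2.2 rfl).1]; norm_num
  by_contra hle
  push_neg at hle
  have hcont : ContinuousOn f (uIcc t 0) := hf.1.1.continuous.continuousOn
  have hmem : (0 : ℝ) ∈ uIcc (f t) (f 0) := mem_uIcc.mpr (Or.inl ⟨hle, h0.le⟩)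
  obtain ⟨z, _, hz⟩ := intermediate_value_uIcc hcont hmem
  exact hne z hz

private lemma fc1_tendsto (hN : 2 ≤ N) (hf : IsFc N 1 f) :
    Tendsto f atBot (nhds 0) := by
  have hmono : Monotone f := (strictMono_of_deriv_pos (by
    intro s
    rw [(gss_hd1 hf.1 s).deriv]
    exact fc1_dpos hN hf s)).monotone
  have hbdd : BddBelow (Set.range f) := ⟨0, by rintro _ ⟨s, rfl⟩; exact (fc1_pos hN hf s).le⟩
  have htend := tendsto_atBot_ciInf hmono hbdd
  have hL0 : 0 ≤ ⨅ s, f s := le_ciInf fun s => (fc1_pos hN hf s).le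
  rcases eq_or_lt_of_le hL0 with h | h
  · rwa [← h] at htend
  · exfalso
    set L := ⨅ s, f s with hLdef
    have hLN : 0 < L ^ N := pow_pos h N
    have hbase : (1 : ℝ) < 1 + L ^ N := by linarith
    have hexp : -(2 : ℝ) / N < 0 := by
      rw [neg_div]; exact neg_neg_iff_pos.mpr (by positivity)
    set m := (1 + L ^ N) ^ (-(2 : ℝ) / N) with hm
    have hm1 : m < 1 := Real.rpow_lt_one_of_one_lt_of_neg hbase hexp
    set δ := Real.sqrt (1 - m) with hδ
    have hδpos : 0 < δ := Real.sqrt_pos.mpr (by linarith)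
    have hder : ∀ s, δ ≤ deriv f s := by
      intro s
      have h1 := fc_inv le_rfl hN hf s
      have h2 : (1 + f s ^ N) ^ (-(2 : ℝ) / N) ≤ m := by
        apply Real.rpow_le_rpow_of_nonpos (by linarith) ?_ hexp.le
        have hLs : L ≤ f s := ciInf_le hbdd s
        have : L ^ N ≤ f s ^ N := pow_le_pow_left₀ hL0 hLs N
        linarith
      have h3 : 1 - m ≤ deriv f s ^ 2 := by linarith [h1, h2]
      calc δ ≤ Real.sqrt (deriv f s ^ 2) := Real.sqrt_le_sqrt h3
        _ = deriv f s := by rw [Real.sqrt_sq (fc1_dpos hN hf s).le]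
    have hg : ∀ s, HasDerivAt (fun u => f u - δ * u) (deriv f s - δ) s := by
      intro s
      exact ((gss_hd1 hf.1 s).sub ((hasDerivAt_id s).const_mul δ)).congr_deriv (by simp)
    have hgm : Monotone fun u => f u - δ * u :=
      monotone_of_deriv_nonneg (fun s => (hg s).differentiableAt)
        (fun s => by rw [(hg s).deriv]; linarith [hder s])
    set t0 := -(f 0 + 1) / δ with ht0def
    have ht0 : t0 ≤ 0 := by
      apply div_nonpos_of_nonpos_of_nonneg (by linarith [fc1_pos hN hf 0]) hδpos.le
    have hkey := hgm ht0
    have hδt0 : δ * t0 = -(f 0 + 1) := by rw [ht0def]; field_simp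
    simp only at hkey
    nlinarith [fc1_pos hN hf t0]

private lemma fc_pos_lt (hclt : c < 1) (hN : 2 ≤ N) (hf : IsFc N c f) (t : ℝ) : 0 < f t := by
  have hne : ∀ s, f s ≠ 0 := fun s hs => by
    have := fc_ge hclt.le hN hf s
    rw [hs, zero_pow (by omega)] at this
    linarith
  have h0 : 0 < f 0 := by
    rw [(hf.2.1 hclt).1]; exact Real.rpow_pos_of_pos (by linarith) _
  by_contra hle
  push_neg at hle
  have hcont : ContinuousOn f (uIcc t 0) := hf.1.1.continuous.continuousOn
  have hmem : (0 : ℝ) ∈ uIcc (f t) (f 0) := mem_uIcc.mpr (Or.inl ⟨hle, h0.le⟩)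
  obtain ⟨z, _, hz⟩ := intermediate_value_uIcc hcont hmem
  exact hne z hz

private lemma fc_even (hclt : c < 1) (hN : 2 ≤ N) (hf : IsFc N c f) (t : ℝ) :
    f (-t) = f t := by
  have key := ode_unique (N - 1) ((N + 2 : ℝ) / 2) (α := fun s => (f s, deriv f s))
    (β := fun s => (f (-s), -deriv f (-s))) (gss_traj hf.1) (fun u => gss_q2' hf.1 u)
    ?_ ?_ (t₀ := 0) ?_ t
  · exact (congrArg Prod.fst key).symm
  · intro u
    have c1 : HasDerivAt (fun s => f (-s)) (-deriv f (-u)) u := by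
      exact ((gss_hd1 hf.1 (-u)).comp u (hasDerivAt_neg u)).congr_deriv (by simp)
    have c2 : HasDerivAt (fun s => -deriv f (-s)) (deriv (deriv f) (-u)) u := by
      exact ((gss_hd2 hf.1 (-u)).comp u (hasDerivAt_neg u)).neg.congr_deriv (by simp)
    have := c1.prodMk c2
    convert this using 2
    rw [(hf.1.2 (-u)).2]
    simp [neg_sq]
  · intro u
    simpa [neg_sq] using gss_q2' hf.1 (-u)
  · show (f 0, deriv f 0) = (f (-0), -deriv f (-0))
    rw [neg_zero, (hf.2.1 hclt).2]
    norm_num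

private lemma fc_glim (hf : IsGSS N f) {lam : ℝ}
    (hlam : Tendsto (fun t => Real.sqrt (1 + t ^ 2) - f t) atTop (nhds lam)) :
    Tendsto (fun t => t - f t) atTop (nhds lam) ∧ ∀ t, t - f t ≤ lam := by
  have h2 : Tendsto (fun t : ℝ => t - f t) atTop (nhds lam) := by
    have h := hlam.sub (sqrtlim 1 zero_le_one)
    rw [sub_zero] at h
    exact h.congr fun t => by ring
  refine ⟨h2, ?_⟩
  have hmono : Monotone fun t => t - f t := by
    apply monotone_of_deriv_nonneg
    · exact fun t => ((hasDerivAt_id' t).sub (gss_hd1 hf t)).differentiableAt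
    · intro t
      rw [HasDerivAt.deriv (f := fun t => t - f t) ((hasDerivAt_id' t).sub (gss_hd1 hf t))]
      have := (hf.2 t).1
      have := abs_lt.mp this
      linarith [this.2]
  exact fun t => hmono.ge_of_tendsto h2 t

private lemma uC_eq {n : ℕ} (f : ℝ → ℝ) (x : EuclideanSpace ℝ (Fin (n + 2))) :
    uC n f x = Real.sqrt (f (x 0) ^ 2 + Real.sqrt (‖x‖ ^ 2 - x 0 ^ 2) ^ 2) := by
  rw [uC, Real.sq_sqrt (by linarith [coordsq_le x])]
  ring_nf

private lemma scenA {n : ℕ} {f : ℝ → ℝ} {lam b σ : ℝ}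
    (y : EuclideanSpace ℝ (Fin (n + 2))) (hy : ‖y‖ = 1)
    (hb : 0 < b) (hbsq : b ^ 2 = y 0 ^ 2) (hσ : σ * y 0 = b)
    (hpos : ∀ t, 0 < f t) (hfev : ∀ t, f (σ * t) = f t)
    (hkey : ∀ t : ℝ, t * y 0 - b * f t ≤ b * lam)
    (hlim : Tendsto (fun t : ℝ => t - f t) atTop (nhds lam)) :
    sSup (Set.range fun x : EuclideanSpace ℝ (Fin (n + 2)) =>
      (inner ℝ x y : ℝ) - uC n f x) = b * lam := by
  have hy2 : y 0 ^ 2 ≤ 1 := by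
    have h := coordsq_le y
    rw [hy, one_pow] at h
    exact h
  apply supeq _ _ ?_ (v := fun t => wit (σ * t) (f t / b) y)
  · -- limit along witnesses
    have hcomp : ∀ t : ℝ, (inner ℝ (wit (σ * t) (f t / b) y) y : ℝ) -
        uC n f (wit (σ * t) (f t / b) y) = b * (t - f t) := by
      intro t
      have hWu : uC n f (wit (σ * t) (f t / b) y) = f t / b := by
        rw [uC, wit_zero, wit_normsq, hfev, hy]
        rw [show f t ^ 2 + ((σ * t) ^ 2 + (f t / b) ^ 2 * (1 ^ 2 - y 0 ^ 2)) - (σ * t) ^ 2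
            = (f t / b) ^ 2 by field_simp; rw [← hbsq]; ring]
        exact Real.sqrt_sq (div_nonneg (hpos t).le hb.le)
      rw [wit_inner, hWu, hy]
      have : σ * t * y 0 = t * b := by rw [mul_comm σ t, mul_assoc, hσ]
      rw [this]
      have hb0 : b ≠ 0 := hb.ne'
      field_simp
      rw [← hbsq]
      ring
    exact (hlim.const_mul b).congr fun t => (hcomp t).symm
  · -- upper bound
    intro x
    have h1 := inner_le x y
    set s := Real.sqrt (‖x‖ ^ 2 - x 0 ^ 2) with hsdef
    set a := Real.sqrt (‖y‖ ^ 2 - y 0 ^ 2) with hadef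
    have hs0 : 0 ≤ s := Real.sqrt_nonneg _
    have ha0 : 0 ≤ a := Real.sqrt_nonneg _
    have hab : a ^ 2 + b ^ 2 = 1 := by
      rw [hadef, Real.sq_sqrt (by linarith [coordsq_le y]), hy, hbsq]; ring
    have h2 : a * s + b * f (x 0) ≤ Real.sqrt (f (x 0) ^ 2 + s ^ 2) :=
      cs2 ha0 hb.le hs0 (hpos _).le hab
    rw [uC_eq, ← hsdef]
    have h3 := hkey (x 0)
    have : x 0 * y 0 ≤ x 0 * y 0 := le_refl _
    linarith [h1, h2, h3]

private lemma scenB {n : ℕ} {f : ℝ → ℝ} (y : EuclideanSpace ℝ (Fin (n + 2)))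
    (hy : ‖y‖ ≤ 1) (hy0 : y 0 = 0) (hpos : ∀ t, 0 ≤ f t)
    {v : ℝ → EuclideanSpace ℝ (Fin (n + 2))}
    (hv : Tendsto (fun t => (inner ℝ (v t) y : ℝ) - uC n f (v t)) atTop (nhds 0)) :
    sSup (Set.range fun x : EuclideanSpace ℝ (Fin (n + 2)) =>
      (inner ℝ x y : ℝ) - uC n f x) = 0 := by
  apply supeq _ _ ?_ hv
  intro x
  have h1 := inner_le x y
  set s := Real.sqrt (‖x‖ ^ 2 - x 0 ^ 2) with hsdef
  have hs0 : 0 ≤ s := Real.sqrt_nonneg _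
  have ha : Real.sqrt (‖y‖ ^ 2 - y 0 ^ 2) ≤ 1 := by
    rw [hy0]
    simpa [Real.sqrt_sq_eq_abs, abs_norm] using hy
  have h2 : s ≤ uC n f x := by
    rw [uC_eq, ← hsdef]
    calc s = Real.sqrt (s ^ 2) := (Real.sqrt_sq hs0).symm
      _ ≤ _ := Real.sqrt_le_sqrt (by nlinarith [sq_nonneg (f (x 0))])
  have hx0 : x 0 * y 0 = 0 := by rw [hy0, mul_zero]
  have h3 : s * Real.sqrt (‖y‖ ^ 2 - y 0 ^ 2) ≤ s := mul_le_of_le_one_right hs0 ha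
  linarith [h1, h2, h3, hx0]

private lemma frontier_facts {n : ℕ} (y : EuclideanSpace ℝ (Fin (n + 2)))
    (hy : y ∈ frontier {y : EuclideanSpace ℝ (Fin (n + 2)) | ‖y‖ < 1 ∧ 0 < y 0}) :
    ‖y‖ ≤ 1 ∧ 0 ≤ y 0 ∧ (‖y‖ = 1 ∨ y 0 = 0) := by
  have hco : Continuous fun x : EuclideanSpace ℝ (Fin (n + 2)) => x 0 :=
    (EuclideanSpace.proj (0 : Fin (n + 2))).continuous
  have hopen : IsOpen {y : EuclideanSpace ℝ (Fin (n + 2)) | ‖y‖ < 1 ∧ 0 < y 0} :=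
    (isOpen_lt continuous_norm continuous_const).and (isOpen_lt continuous_const hco)
  have hclosed : IsClosed {y : EuclideanSpace ℝ (Fin (n + 2)) | ‖y‖ ≤ 1 ∧ 0 ≤ y 0} := by
    rw [Set.setOf_and]
    exact (isClosed_le continuous_norm continuous_const).inter
      (isClosed_le continuous_const hco)
  have hsub : {y : EuclideanSpace ℝ (Fin (n + 2)) | ‖y‖ < 1 ∧ 0 < y 0} ⊆
      {y : EuclideanSpace ℝ (Fin (n + 2)) | ‖y‖ ≤ 1 ∧ 0 ≤ y 0} :=
    fun z hz => ⟨hz.1.le, hz.2.le⟩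
  have hcl : y ∈ {y : EuclideanSpace ℝ (Fin (n + 2)) | ‖y‖ ≤ 1 ∧ 0 ≤ y 0} :=
    closure_minimal hsub hclosed (frontier_subset_closure hy)
  have hnot : y ∉ {y : EuclideanSpace ℝ (Fin (n + 2)) | ‖y‖ < 1 ∧ 0 < y 0} := by
    rw [hopen.frontier_eq] at hy
    exact hy.2
  refine ⟨hcl.1, hcl.2, ?_⟩
  by_contra hcon
  push_neg at hcon
  exact hnot ⟨lt_of_le_of_ne hcl.1 hcon.1, lt_of_le_of_ne hcl.2 (Ne.symm hcon.2)⟩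


end Aux

open Set in
/-- boundary values of the Legendre transform
`u_c*(y) = sup_x (⟨x, y⟩ - u_c x)`: for `c < 1`, `u_c*(y) = λ_c |y₁|` on the unit
sphere; for `c = 1`, `u_1*(y) = λ_1 y₁` on the boundary of the half-ball. -/
theorem stmt_14 (n : ℕ) (c : ℝ) (hc : c ≤ 1) (f : ℝ → ℝ) (hf : IsFc (n + 2) c f)
    (lam : ℝ)
    (hlam : Tendsto (fun t => Real.sqrt (1 + t ^ 2) - f t) atTop (nhds lam)) :
    (c < 1 → ∀ y : EuclideanSpace ℝ (Fin (n + 2)), ‖y‖ = 1 →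
      sSup (Set.range fun x : EuclideanSpace ℝ (Fin (n + 2)) =>
        (inner ℝ x y : ℝ) - uC n f x) = lam * |y 0|) ∧
    (c = 1 → ∀ y ∈ frontier {y : EuclideanSpace ℝ (Fin (n + 2)) | ‖y‖ < 1 ∧ 0 < y 0},
      sSup (Set.range fun x : EuclideanSpace ℝ (Fin (n + 2)) =>
        (inner ℝ x y : ℝ) - uC n f x) = lam * y 0) := by

  have hN : 2 ≤ n + 2 := by omega
  obtain ⟨hglim, hgub⟩ := fc_glim hf.1 hlam
  constructor
  · -- case c < 1
    intro hclt y hy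
    have hpos := fc_pos_lt hclt hN hf
    have heven := fc_even hclt hN hf
    by_cases hy0 : y 0 = 0
    · rw [hy0, abs_zero, mul_zero]
      have hval : ∀ s : ℝ, (inner ℝ (s • y) y : ℝ) - uC n f (s • y) =
          -(Real.sqrt (f 0 ^ 2 + s ^ 2) - s) := by
        intro s
        have hi : (inner ℝ (s • y) y : ℝ) = s := by
          rw [real_inner_smul_left, real_inner_self_eq_norm_sq, hy]; ring
        have h00 : (s • y) 0 = 0 := by
          show s * y 0 = 0
          rw [hy0, mul_zero]
        have hns : ‖s • y‖ ^ 2 = s ^ 2 := by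
          rw [norm_smul, Real.norm_eq_abs, hy, mul_one, sq_abs]
        rw [hi, uC, h00, hns]
        ring_nf
      apply scenB y hy.le hy0 (fun t => (hpos t).le) (v := fun s => s • y)
      have := (sqrtlim (f 0 ^ 2) (sq_nonneg _)).neg
      rw [neg_zero] at this
      exact this.congr fun s => (hval s).symm
    · have hb : 0 < |y 0| := abs_pos.mpr hy0
      rw [mul_comm]
      set σ : ℝ := if 0 ≤ y 0 then 1 else -1 with hσdef
      have hσ : σ * y 0 = |y 0| := by
        rw [hσdef]
        split_ifs with h
        · rw [one_mul, abs_of_nonneg h]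
        · push_neg at h
          rw [abs_of_neg h]; ring
      have hfev : ∀ t, f (σ * t) = f t := by
        intro t
        rw [hσdef]
        split_ifs with h
        · rw [one_mul]
        · rw [show (-1 : ℝ) * t = -t by ring]
          exact heven t
      apply scenA y hy hb (sq_abs (y 0)) hσ hpos hfev ?_ hglim
      intro t
      have h1 : t * y 0 ≤ |t| * |y 0| := by
        calc t * y 0 ≤ |t * y 0| := le_abs_self _
          _ = |t| * |y 0| := abs_mul t (y 0)
      have h2 : |t| - f t ≤ lam := by
        rcases le_or_gt 0 t with h | h
        · rw [abs_of_nonneg h]; exact hgub t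
        · rw [abs_of_neg h, ← heven t]
          exact hgub (-t)
      nlinarith [hb, h2]
  · -- case c = 1
    intro hceq y hyfr
    subst hceq
    obtain ⟨hy1, hy0, hdisj⟩ := frontier_facts y hyfr
    have hpos := fc1_pos hN hf
    by_cases h0 : y 0 = 0
    · rw [h0, mul_zero]
      have hval : ∀ T : ℝ, (inner ℝ (wit (-T) 0 y) y : ℝ) - uC n f (wit (-T) 0 y) =
          -f (-T) := by
        intro T
        have hWu : uC n f (wit (-T) 0 y) = f (-T) := by
          rw [uC, wit_zero, wit_normsq]
          rw [show f (-T) ^ 2 + ((-T) ^ 2 + 0 ^ 2 * (‖y‖ ^ 2 - y 0 ^ 2)) - (-T) ^ 2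
              = f (-T) ^ 2 by ring]
          exact Real.sqrt_sq (hpos _).le
        rw [wit_inner, hWu, h0]
        ring
      apply scenB y hy1 h0 (fun t => (hpos t).le) (v := fun T => wit (-T) 0 y)
      have h2 : Tendsto (fun T : ℝ => f (-T)) atTop (nhds 0) :=
        (fc1_tendsto hN hf).comp tendsto_neg_atTop_atBot
      have := h2.neg
      rw [neg_zero] at this
      exact this.congr fun T => (hval T).symm
    · have hy0' : 0 < y 0 := lt_of_le_of_ne hy0 (Ne.symm h0)
      have h1 : ‖y‖ = 1 := hdisj.resolve_right h0
      rw [mul_comm]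
      apply scenA y h1 hy0' rfl (one_mul _) (fun t => hpos t)
        (fun t => by rw [one_mul]) ?_ hglim
      intro t
      have := hgub t
      nlinarith [hy0']
end

section
/- The map c ↦ λ_c satisfies: λ_c → −∞ as c → −∞, and λ_c → +∞ as c → 1 from the left (c < 1). -/
open Real Filter

open Set Topology

section Aux

lemma cross_pos (φ : ℝ → ℝ) (hφ : Differentiable ℝ φ) {a s : ℝ} (has : a ≤ s)
    (h0 : 0 < φ a) (hc : ∀ t, a < t → t ≤ s → φ t = 0 → 0 < deriv φ t) : 0 < φ s := by
  by_contra hns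
  push_neg at hns
  have hSc : IsClosed (Icc a s ∩ φ ⁻¹' (Iic 0)) :=
    isClosed_Icc.inter (isClosed_Iic.preimage hφ.continuous)
  have hSne : (Icc a s ∩ φ ⁻¹' (Iic 0)).Nonempty := ⟨s, ⟨has, le_refl s⟩, hns⟩
  have hSbd : BddBelow (Icc a s ∩ φ ⁻¹' (Iic 0)) := ⟨a, fun x hx => hx.1.1⟩
  obtain ⟨z, hzS, hzmin⟩ : ∃ z ∈ Icc a s ∩ φ ⁻¹' (Iic 0),
      ∀ t ∈ Icc a s ∩ φ ⁻¹' (Iic 0), z ≤ t :=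
    ⟨sInf _, hSc.csInf_mem hSne hSbd, fun t ht => csInf_le hSbd ht⟩
  have hza : a ≤ z := hzS.1.1
  have hzneg : φ z ≤ 0 := hzS.2
  have haz : a < z := lt_of_le_of_ne hza (by rintro rfl; exact absurd h0 (not_lt.2 hzneg))
  have hbefore : ∀ t, a ≤ t → t < z → 0 < φ t := by
    intro t hat htz
    by_contra hnt
    push_neg at hnt
    exact absurd (hzmin t ⟨⟨hat, le_trans htz.le hzS.1.2⟩, hnt⟩) (not_le.2 htz)
  have hφz : φ z = 0 := by
    rcases lt_or_eq_of_le hzneg with hlt | heq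
    · exfalso
      obtain ⟨u, hu, hu0⟩ : ∃ u ∈ Icc a z, φ u = 0 := by
        have := intermediate_value_Icc' hza (hφ.continuous.continuousOn (s := Icc a z))
        exact this ⟨hlt.le, h0.le⟩
      have hune : u ≠ z := by rintro rfl; exact absurd hu0 (ne_of_lt hlt)
      exact absurd hu0 (ne_of_gt (hbefore u hu.1 (lt_of_le_of_ne hu.2 hune)))
    · exact heq
  have hd : 0 < deriv φ z := hc z haz hzS.1.2 hφz
  have hslope : Tendsto (slope φ z) (𝓝[≠] z) (𝓝 (deriv φ z)) :=
    hasDerivAt_iff_tendsto_slope.1 (hφ z).hasDerivAt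
  have hev : ∀ᶠ u in 𝓝[<] z, 0 < slope φ z u :=
    (hslope.mono_left (nhdsWithin_mono z fun u hu => ne_of_lt hu)).eventually
      (eventually_gt_nhds hd)
  have hev2 : ∀ᶠ u in 𝓝[<] z, u ∈ Ioo a z := Ioo_mem_nhdsLT haz
  obtain ⟨u, hu1, hu2⟩ := (hev.and hev2).exists
  have huz : u < z := hu2.2
  have : slope φ z u = φ u / (u - z) := by
    rw [slope_def_field, hφz]; ring_nf
  rw [this] at hu1
  have hneg : φ u < 0 := by
    by_contra hnn
    push_neg at hnn
    have : φ u / (u - z) ≤ 0 := div_nonpos_of_nonneg_of_nonpos hnn (by linarith)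
    linarith
  exact absurd hneg (not_lt.2 (hbefore u hu2.1.le huz).le)

lemma cross_pos' (φ : ℝ → ℝ) (hφ : Differentiable ℝ φ) {a s : ℝ} (has : a < s)
    (h0 : φ a = 0) (hd : 0 < deriv φ a)
    (hc : ∀ t, a < t → t ≤ s → φ t = 0 → 0 < deriv φ t) : 0 < φ s := by
  have hslope : Tendsto (slope φ a) (𝓝[≠] a) (𝓝 (deriv φ a)) :=
    hasDerivAt_iff_tendsto_slope.1 (hφ a).hasDerivAt
  have hev : ∀ᶠ u in 𝓝[>] a, 0 < slope φ a u :=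
    (hslope.mono_left (nhdsWithin_mono a fun u hu => ne_of_gt hu)).eventually
      (eventually_gt_nhds hd)
  have hev2 : ∀ᶠ u in 𝓝[>] a, u ∈ Ioo a s := Ioo_mem_nhdsGT has
  obtain ⟨u, hu1, hu2⟩ := (hev.and hev2).exists
  have hupos : 0 < φ u := by
    have : slope φ a u = φ u / (u - a) := by rw [slope_def_field, h0]; ring_nf
    rw [this] at hu1
    rcases div_pos_iff.1 hu1 with ⟨h,_⟩|⟨_,h2⟩
    · exact h
    · exfalso; have := hu2.1; linarith
  exact cross_pos φ hφ hu2.2.le hupos fun t ht hts => hc t (lt_trans hu2.1 ht) hts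

lemma sol_facts (n : ℕ) (hn : 2 ≤ n) (c : ℝ) (hc : c < 1) (f : ℝ → ℝ) (hf : IsFc n c f) :
    Differentiable ℝ f ∧ Differentiable ℝ (deriv f) ∧
    (∀ t, 0 < 1 - deriv f t ^ 2) ∧
    (∀ t, 1 ≤ c + f t ^ n) ∧
    (∀ t, 1 - deriv f t ^ 2 = (c + f t ^ n) ^ (-(2:ℝ)/(n:ℝ))) ∧
    (∀ t, (1 - c) ^ ((1:ℝ)/(n:ℝ)) ≤ f t) := by
  have hn0 : (n:ℝ) ≠ 0 := by positivity
  have h1c : (0:ℝ) < 1 - c := by linarith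
  have hb : ∀ t, |deriv f t| < 1 := fun t => (hf.1.2 t).1
  have ode : ∀ t, deriv (deriv f) t
      = f t ^ (n-1) * (1 - deriv f t ^ 2) ^ ((n+2:ℝ)/2) := fun t => (hf.1.2 t).2
  have hpos : ∀ t, 0 < 1 - deriv f t ^ 2 := by
    intro t; have := abs_lt.1 (hb t); nlinarith
  have hfd : Differentiable ℝ f := hf.1.1.differentiable (by norm_num)
  have hgd : Differentiable ℝ (deriv f) := by
    have h2 : ContDiff ℝ (1+1) f := by
      have := hf.1.1; norm_num at this ⊢; exact this
    exact ((contDiff_succ_iff_deriv.mp h2).2.2).differentiable one_ne_zero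
  -- first integral
  have hE : ∀ t, HasDerivAt (fun u => (1 - deriv f u ^ 2) ^ (-(n:ℝ)/2) - f u ^ n)
      ((0 - (2:ℕ) * deriv f t ^ 1 * deriv (deriv f) t) * (-(n:ℝ)/2)
          * (1 - deriv f t ^ 2) ^ (-(n:ℝ)/2 - 1)
        - (n:ℝ) * f t ^ (n-1) * deriv f t) t := by
    intro t
    have hgt : HasDerivAt (deriv f) (deriv (deriv f) t) t := (hgd t).hasDerivAt
    have hsq : HasDerivAt (fun u => 1 - deriv f u ^ 2)
        (0 - (2:ℕ) * deriv f t ^ 1 * deriv (deriv f) t) t :=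
      (hasDerivAt_const t (1:ℝ)).sub (hgt.pow 2)
    have hrp := hsq.rpow_const (p := -(n:ℝ)/2) (Or.inl (ne_of_gt (hpos t)))
    exact hrp.sub (((hfd t).hasDerivAt).pow n)
  have hE0 : ∀ t, deriv (fun u => (1 - deriv f u ^ 2) ^ (-(n:ℝ)/2) - f u ^ n) t = 0 := by
    intro t
    rw [(hE t).deriv, ode t]
    have hab : (1 - deriv f t ^ 2) ^ ((n+2:ℝ)/2)
        * (1 - deriv f t ^ 2) ^ (-(n:ℝ)/2 - 1) = 1 := by
      rw [← Real.rpow_add (hpos t), show ((n:ℝ)+2)/2 + (-(n:ℝ)/2 - 1) = 0 by ring,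
        Real.rpow_zero]
    push_cast
    linear_combination ((n:ℝ) * deriv f t * f t ^ (n-1)) * hab
  have hconst : ∀ t, (1 - deriv f t ^ 2) ^ (-(n:ℝ)/2) - f t ^ n
      = (1 - deriv f 0 ^ 2) ^ (-(n:ℝ)/2) - f 0 ^ n := by
    intro t
    exact is_const_of_deriv_eq_zero (fun u => ((hE u).differentiableAt)) hE0 t 0
  have hf0 : f 0 = (1 - c) ^ ((1:ℝ)/n) := (hf.2.1 hc).1
  have hg0 : deriv f 0 = 0 := (hf.2.1 hc).2
  have hMn : ((1-c) ^ ((1:ℝ)/(n:ℝ))) ^ n = 1 - c := by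
    rw [← Real.rpow_natCast ((1-c) ^ ((1:ℝ)/(n:ℝ))) n, ← Real.rpow_mul h1c.le,
      one_div, inv_mul_cancel₀ hn0, Real.rpow_one]
  have K : ∀ t, (1 - deriv f t ^ 2) ^ (-(n:ℝ)/2) = c + f t ^ n := by
    intro t
    have := hconst t
    rw [hf0, hg0] at this
    simp only [ne_eq, OfNat.ofNat_ne_zero, not_false_eq_true, zero_pow, sub_zero,
      Real.one_rpow] at this
    rw [hMn] at this
    linarith
  have hx1 : ∀ t, 1 ≤ c + f t ^ n := by
    intro t
    rw [← K t]
    exact Real.one_le_rpow_of_pos_of_le_one_of_nonpos (hpos t)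
      (by nlinarith [sq_nonneg (deriv f t)]) (by
        apply div_nonpos_of_nonpos_of_nonneg <;> simp [Nat.cast_nonneg])
  have I2 : ∀ t, 1 - deriv f t ^ 2 = (c + f t ^ n) ^ (-(2:ℝ)/(n:ℝ)) := by
    intro t
    calc 1 - deriv f t ^ 2
        = (1 - deriv f t ^ 2) ^ ((-(n:ℝ)/2) * (-(2:ℝ)/(n:ℝ))) := by
          rw [show (-(n:ℝ)/2) * (-(2:ℝ)/(n:ℝ)) = 1 by field_simp, Real.rpow_one]
      _ = ((1 - deriv f t ^ 2) ^ (-(n:ℝ)/2)) ^ (-(2:ℝ)/(n:ℝ)) :=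
          Real.rpow_mul (hpos t).le _ _
      _ = (c + f t ^ n) ^ (-(2:ℝ)/(n:ℝ)) := by rw [K t]
  refine ⟨hfd, hgd, hpos, hx1, I2, ?_⟩
  have hMpos : 0 < (1-c) ^ ((1:ℝ)/(n:ℝ)) := Real.rpow_pos_of_pos h1c _
  have hfn : ∀ t, 1 - c ≤ f t ^ n := fun t => by have := hx1 t; linarith
  intro t
  by_contra hlt
  push_neg at hlt
  have hne : f t ≠ 0 := by
    intro h0
    have := hfn t
    rw [h0, zero_pow (by omega)] at this
    linarith
  rcases lt_or_gt_of_ne hne with hneg | hpos'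
  · obtain ⟨u, -, hu0⟩ : ∃ u ∈ uIcc (0:ℝ) t, f u = 0 := by
      have hsub := intermediate_value_uIcc (hfd.continuous.continuousOn (s := uIcc 0 t))
      have : (0:ℝ) ∈ uIcc (f 0) (f t) := by
        rw [hf0]
        exact mem_uIcc.2 (Or.inr ⟨hneg.le, hMpos.le⟩)
      exact hsub this
    have := hfn u
    rw [hu0, zero_pow (by omega)] at this
    linarith
  · have := pow_lt_pow_left₀ hlt hpos'.le (by omega : n ≠ 0)
    rw [hMn] at this
    exact absurd (hfn t) (not_le.2 this)

-- lam ≥ t - f t, for any t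
lemma lam_ge (n : ℕ) (hn : 2 ≤ n) (c : ℝ) (hc : c < 1) (f : ℝ → ℝ) (hf : IsFc n c f)
    (lam : ℝ) (hl : Tendsto (fun t => Real.sqrt (1 + t ^ 2) - f t) atTop (𝓝 lam))
    (t : ℝ) : t - f t ≤ lam := by
  obtain ⟨hfd, -, -, -, -, -⟩ := sol_facts n hn c hc f hf
  have hb : ∀ x, deriv f x ≤ 1 := fun x => (abs_lt.1 (hf.1.2 x).1).2.le
  refine ge_of_tendsto hl ?_
  filter_upwards [eventually_ge_atTop t] with T hT
  have h1 : f T - f t ≤ 1 * (T - t) := image_sub_le_mul_sub_of_deriv_le hfd hb hT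
  have h2 : T ≤ Real.sqrt (1 + T ^ 2) := by
    rcases le_or_gt T 0 with h | h
    · exact h.trans (Real.sqrt_nonneg _)
    · calc T = Real.sqrt (T ^ 2) := by rw [Real.sqrt_sq h.le]
        _ ≤ Real.sqrt (1 + T ^ 2) := Real.sqrt_le_sqrt (by linarith)
  linarith

lemma part2 (n : ℕ) (hn : 2 ≤ n) (c : ℝ) (h0c : 0 < c) (hc : c < 1) (f : ℝ → ℝ)
    (hf : IsFc n c f) (lam : ℝ)
    (hl : Tendsto (fun t => Real.sqrt (1 + t ^ 2) - f t) atTop (𝓝 lam)) :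
    -(1/2) * Real.log ((1-c) ^ ((1:ℝ)/(n:ℝ))) - 1 ≤ lam := by
  obtain ⟨hfd, hgd, hpos, hx1, I2, hflow⟩ := sol_facts n hn c hc f hf
  have hn0 : (0:ℝ) < n := by positivity
  set ε := (1-c) ^ ((1:ℝ)/(n:ℝ)) with hε
  have hε0 : 0 < ε := Real.rpow_pos_of_pos (by linarith) _
  have hε1 : ε < 1 := Real.rpow_lt_one (by linarith) (by linarith) (by positivity)
  set T := -(1/2) * Real.log ε with hT
  have hTpos : 0 < T := by
    have := Real.log_neg hε0 hε1
    rw [hT]; nlinarith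
  have hf0 : f 0 = ε := (hf.2.1 hc).1
  have hg0 : deriv f 0 = 0 := (hf.2.1 hc).2
  -- the comparison function
  have hwd : ∀ t : ℝ, HasDerivAt (fun u => ε * Real.exp (2*u)) (2 * ε * Real.exp (2*t)) t := by
    intro t
    have h1 : HasDerivAt (fun u : ℝ => 2*u) 2 t := by
      simpa using (hasDerivAt_id t).const_mul 2
    have := (h1.exp).const_mul ε
    exact this.congr_deriv (by ring)
  set φ : ℝ → ℝ := fun t => ε * Real.exp (2*t) - f t with hφ
  have hφd : Differentiable ℝ φ := fun t => ((hwd t).differentiableAt).sub (hfd t)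
  have hφder : ∀ t, deriv φ t = 2 * ε * Real.exp (2*t) - deriv f t := by
    intro t
    exact ((hwd t).sub ((hfd t).hasDerivAt)).deriv
  have hφ0 : φ 0 = 0 := by simp [hφ, hf0]
  have hφd0 : 0 < deriv φ 0 := by
    rw [hφder, hg0]
    simp
    positivity
  have hexp2T : Real.exp (2*T) = ε⁻¹ := by
    rw [hT, show 2 * (-(1/2) * Real.log ε) = -(Real.log ε) by ring, Real.exp_neg,
      Real.exp_log hε0]
  have hcross : ∀ t, 0 < t → t ≤ T → φ t = 0 → 0 < deriv φ t := by
    intro t ht0 htT hzero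
    have hft : f t = ε * Real.exp (2*t) := by
      have : ε * Real.exp (2*t) - f t = 0 := hzero
      linarith
    have hftpos : 0 < f t := by rw [hft]; positivity
    have hft1 : f t ≤ 1 := by
      rw [hft]
      calc ε * Real.exp (2*t) ≤ ε * Real.exp (2*T) := by
            have := Real.exp_le_exp.2 (show 2*t ≤ 2*T by linarith)
            nlinarith
        _ = 1 := by rw [hexp2T]; field_simp
    -- g² ≤ f^n ≤ f²
    have hxpos : (0:ℝ) < c + f t ^ n := by linarith [hx1 t]
    have hxinv : (c + f t ^ n)⁻¹ ≤ (c + f t ^ n) ^ (-(2:ℝ)/(n:ℝ)) := by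
      have h := Real.rpow_le_rpow_of_exponent_le (hx1 t)
        (show (-1:ℝ) ≤ -(2:ℝ)/(n:ℝ) by
          rw [neg_div, neg_le_neg_iff, div_le_one hn0]
          exact_mod_cast hn)
      rwa [Real.rpow_neg_one] at h
    have hg2 : deriv f t ^ 2 ≤ f t ^ n := by
      have hI := I2 t
      have hinv : (c + f t ^ n) * (c + f t ^ n)⁻¹ = 1 := mul_inv_cancel₀ (ne_of_gt hxpos)
      nlinarith [hx1 t, sq_nonneg (c + f t ^ n - 1)]
    have hfn2 : f t ^ n ≤ f t ^ 2 := pow_le_pow_of_le_one hftpos.le hft1 hn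
    rw [hφder]
    nlinarith [hft, sq_nonneg (deriv f t + f t)]
  have hφT : 0 < φ T := cross_pos' φ hφd hTpos hφ0 hφd0 hcross
  have hfT : f T < ε * Real.exp (2*T) := by
    have : ε * Real.exp (2*T) - f T > 0 := hφT
    linarith
  have hfT1 : f T < 1 := by
    rw [hexp2T] at hfT
    calc f T < ε * ε⁻¹ := hfT
      _ = 1 := by field_simp
  have := lam_ge n hn c hc f hf lam hl T
  linarith

lemma part1 (n : ℕ) (hn : 2 ≤ n) (c : ℝ) (hc : c < 1) (f : ℝ → ℝ)
    (hf : IsFc n c f) (lam : ℝ)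
    (hl : Tendsto (fun t => Real.sqrt (1 + t ^ 2) - f t) atTop (𝓝 lam))
    (hM2 : (2:ℝ) ≤ (1-c) ^ ((1:ℝ)/(n:ℝ)))
    (hMA : (2:ℝ) ≤ ((1-c) ^ ((1:ℝ)/(n:ℝ))) ^ (n-1) * (0.19:ℝ) ^ (((n:ℝ)+2)/2)) :
    lam ≤ 1 - (1-c) ^ ((1:ℝ)/(n:ℝ)) := by
  obtain ⟨hfd, hgd, hpos, hx1, I2, hflow⟩ := sol_facts n hn c hc f hf
  have hn0 : (n:ℝ) ≠ 0 := by positivity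
  have h1c : (0:ℝ) < 1 - c := by linarith
  set M := (1-c) ^ ((1:ℝ)/(n:ℝ)) with hM
  have hMn : M ^ n = 1 - c := by
    rw [hM, ← Real.rpow_natCast ((1-c) ^ ((1:ℝ)/(n:ℝ))) n, ← Real.rpow_mul h1c.le,
      one_div, inv_mul_cancel₀ hn0, Real.rpow_one]
  have hg0 : deriv f 0 = 0 := (hf.2.1 hc).2
  have ode : ∀ t, deriv (deriv f) t
      = f t ^ (n-1) * (1 - deriv f t ^ 2) ^ ((n+2:ℝ)/2) := fun t => (hf.1.2 t).2
  have hfpos : ∀ t, 0 < f t := fun t => lt_of_lt_of_le (by linarith) (hflow t)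
  have hg'nn : ∀ t, 0 ≤ deriv (deriv f) t := by
    intro t
    rw [ode t]
    exact mul_nonneg (pow_nonneg (hfpos t).le _) (Real.rpow_nonneg (hpos t).le _)
  have hgmono : Monotone (deriv f) := monotone_of_deriv_nonneg hgd hg'nn
  have hgnn : ∀ t, 0 ≤ t → 0 ≤ deriv f t := fun t ht => hg0 ▸ hgmono ht
  -- bootstrap: deriv f (1/2) ≥ 0.9
  have hg12 : (0.9:ℝ) ≤ deriv f (1/2) := by
    by_contra hlt
    push_neg at hlt
    have hder2 : ∀ x ∈ interior (Icc (0:ℝ) (1/2)), (2:ℝ) ≤ deriv (deriv f) x := by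
      intro x hx
      rw [interior_Icc] at hx
      have hgx0 : 0 ≤ deriv f x := hgnn x hx.1.le
      have hgx9 : deriv f x < 0.9 := lt_of_le_of_lt (hgmono hx.2.le) hlt
      have h19 : (0.19:ℝ) ≤ 1 - deriv f x ^ 2 := by nlinarith
      have hA : (0.19:ℝ) ^ (((n:ℝ)+2)/2) ≤ (1 - deriv f x ^ 2) ^ (((n:ℝ)+2)/2) :=
        Real.rpow_le_rpow (by norm_num) h19 (by positivity)
      have hfM : M ^ (n-1) ≤ f x ^ (n-1) :=
        pow_le_pow_left₀ (by linarith) (hflow x) (n-1)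
      rw [ode x]
      calc (2:ℝ) ≤ M ^ (n-1) * (0.19:ℝ) ^ (((n:ℝ)+2)/2) := hMA
        _ ≤ f x ^ (n-1) * (1 - deriv f x ^ 2) ^ (((n:ℝ)+2)/2) := by
            apply mul_le_mul hfM hA (Real.rpow_nonneg (by norm_num) _)
              (pow_nonneg (by linarith [hfpos x]) _)
    have := (convex_Icc (0:ℝ) (1/2)).mul_sub_le_image_sub_of_le_deriv
      (hgd.continuous.continuousOn) (hgd.differentiableOn) hder2
      0 ⟨le_refl 0, by norm_num⟩ (1/2) ⟨by norm_num, le_refl _⟩ (by norm_num)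
    rw [hg0] at this
    norm_num at this
    linarith
  -- f 1 ≥ M + 0.45
  have hf1 : M + 0.45 ≤ f 1 := by
    have hder9 : ∀ x ∈ interior (Icc (1/2:ℝ) 1), (0.9:ℝ) ≤ deriv f x := by
      intro x hx
      rw [interior_Icc] at hx
      exact le_trans hg12 (hgmono hx.1.le)
    have := (convex_Icc (1/2:ℝ) 1).mul_sub_le_image_sub_of_le_deriv
      (hfd.continuous.continuousOn) (hfd.differentiableOn) hder9
      (1/2) ⟨le_refl _, by norm_num⟩ 1 ⟨by norm_num, le_refl _⟩ (by norm_num)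
    have hfM : M ≤ f (1/2) := hflow _
    norm_num at this
    linarith
  -- comparison function w = (M-1) + sqrt (1+t^2)
  have hwd : ∀ t : ℝ, HasDerivAt (fun u : ℝ => (M-1) + Real.sqrt (1+u^2))
      (1/(2*Real.sqrt (1+t^2)) * (2*t)) t := by
    intro t
    have h1 : HasDerivAt (fun u : ℝ => 1 + u^2) (2*t) t := by
      simpa using (hasDerivAt_pow 2 t).const_add (1:ℝ)
    exact ((Real.hasDerivAt_sqrt (by positivity)).comp t h1).const_add (M-1)
  set φ : ℝ → ℝ := fun t => f t - ((M-1) + Real.sqrt (1+t^2)) with hφ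
  have hφd : Differentiable ℝ φ := fun t => ((hfd t).sub (hwd t).differentiableAt)
  have hsqrt2 : Real.sqrt 2 < 1.45 := by
    nlinarith [Real.sq_sqrt (show (0:ℝ) ≤ 2 by norm_num), Real.sqrt_nonneg 2]
  have hφ1 : 0 < φ 1 := by
    have : Real.sqrt (1 + 1^2) = Real.sqrt 2 := by norm_num
    simp only [hφ, this]
    linarith
  have hcross : ∀ t, 1 < t → φ t = 0 → 0 < deriv φ t := by
    intro t ht hzero
    set h := Real.sqrt (1 + t^2) with hh
    have hh0 : 0 < h := Real.sqrt_pos.2 (by positivity)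
    have hh2 : h^2 = 1 + t^2 := Real.sq_sqrt (by positivity)
    have hh1 : 1 < h := by nlinarith
    have hft : f t = M - 1 + h := by
      have : f t - ((M-1) + h) = 0 := hzero
      linarith
    -- c + f t ^ n > h ^ n
    have hmono : StrictMonoOn (fun y : ℝ => ((M-1)+y)^n - y^n) (Ici 1) := by
      apply strictMonoOn_of_deriv_pos (convex_Ici 1)
      · exact (((continuous_const.add continuous_id).pow n).sub (continuous_pow n)).continuousOn
      · intro y hy
        rw [interior_Ici] at hy
        have hy0 : (0:ℝ) < y := lt_trans one_pos hy
        have hd : HasDerivAt (fun y : ℝ => ((M-1)+y)^n - y^n)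
            ((n:ℝ)*((M-1)+y)^(n-1)*1 - (n:ℝ)*y^(n-1)) y :=
          (((hasDerivAt_id y).const_add (M-1)).pow n).sub (hasDerivAt_pow n y)
        rw [hd.deriv]
        have : y^(n-1) < ((M-1)+y)^(n-1) :=
          pow_lt_pow_left₀ (by linarith) hy0.le (by omega)
        have hnpos : (0:ℝ) < n := by positivity
        nlinarith
    have hψ : ((M-1)+1)^n - 1^n < ((M-1)+h)^n - h^n :=
      hmono (self_mem_Ici) (le_of_lt hh1) hh1
    have hMn1 : ((M-1)+1) = M := by ring
    have hpow : h ^ n < c + f t ^ n := by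
      rw [hft]
      rw [hMn1] at hψ
      simp only [one_pow] at hψ
      linarith [hMn]
    -- deduce deriv f t > t / h
    have hhn0 : (0:ℝ) < h ^ n := by positivity
    have hrp : (c + f t ^ n) ^ (-(2:ℝ)/(n:ℝ)) < (h ^ n) ^ (-(2:ℝ)/(n:ℝ)) :=
      Real.rpow_lt_rpow_of_neg hhn0 hpow (by
        rw [neg_div]
        have : (0:ℝ) < 2 / (n:ℝ) := by positivity
        linarith)
    have hhrp : (h ^ n : ℝ) ^ (-(2:ℝ)/(n:ℝ)) = (1 + t^2)⁻¹ := by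
      have e1 : (h ^ n : ℝ) ^ (-(2:ℝ)/(n:ℝ)) = h ^ ((n:ℝ) * (-(2:ℝ)/(n:ℝ))) := by
        rw [Real.rpow_mul hh0.le, Real.rpow_natCast]
      rw [e1, show ((n:ℝ)) * (-(2:ℝ)/(n:ℝ)) = -(2:ℝ) by field_simp, Real.rpow_neg hh0.le]
      congr 1
      rw [show (2:ℝ) = ((2:ℕ):ℝ) by norm_num, Real.rpow_natCast, hh2]
    have hgsq : (t/h)^2 < deriv f t ^ 2 := by
      have hI := I2 t
      rw [hhrp] at hrp
      have h1t : (0:ℝ) < 1 + t^2 := by positivity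
      have : (t/h)^2 = t^2 / (1+t^2) := by
        rw [div_pow, hh2]
      rw [this]
      have hinv : (1+t^2) * (1+t^2)⁻¹ = 1 := mul_inv_cancel₀ (ne_of_gt h1t)
      have h2 : deriv f t ^ 2 = 1 - (c + f t ^ n) ^ (-(2:ℝ)/(n:ℝ)) := by linarith
      rw [h2, div_lt_iff₀ h1t]
      have h3 := mul_lt_mul_of_pos_right hrp h1t
      rw [inv_mul_cancel₀ (ne_of_gt h1t)] at h3
      have expand : (1 - (c + f t ^ n) ^ (-(2:ℝ)/(n:ℝ))) * (1+t^2)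
          = 1 + t^2 - (c + f t ^ n) ^ (-(2:ℝ)/(n:ℝ)) * (1+t^2) := by ring
      rw [expand]
      linarith [h3]
    have hgt0 : 0 ≤ deriv f t := hgnn t (by linarith)
    have hth : 0 < t / h := by positivity
    have hgt : t / h < deriv f t := by
      by_contra hle
      push_neg at hle
      have := pow_le_pow_left₀ hgt0 hle 2
      linarith
    have hdφ : deriv φ t = deriv f t - 1/(2*h) * (2*t) :=
      (((hfd t).hasDerivAt).sub (hwd t)).deriv
    rw [hdφ]
    have : 1/(2*h) * (2*t) = t / h := by field_simp
    rw [this]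
    linarith
  -- conclude
  have hfinal : ∀ s, 1 ≤ s → Real.sqrt (1 + s^2) - f s ≤ 1 - M := by
    intro s hs
    have := cross_pos φ hφd hs hφ1 (fun t ht hts hz => hcross t ht hz)
    simp only [hφ] at this
    linarith
  refine le_of_tendsto hl ?_
  filter_upwards [eventually_ge_atTop (1:ℝ)] with s hs
  exact hfinal s hs

end Aux

/-- `λ_c → -∞` as `c → -∞` and `λ_c → +∞` as `c → 1⁻`. -/
theorem stmt_15 (n : ℕ) (hn : 2 ≤ n) (F : ℝ → ℝ → ℝ) (lam : ℝ → ℝ)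
    (hF : ∀ c : ℝ, c < 1 → IsFc n c (F c))
    (hlam : ∀ c : ℝ, c < 1 →
      Tendsto (fun t => Real.sqrt (1 + t ^ 2) - F c t) atTop (nhds (lam c))) :
    Tendsto lam atBot atBot ∧ Tendsto lam (nhdsWithin 1 (Set.Iio 1)) atTop := by
  have hn0 : (0:ℝ) < (n:ℝ) := by positivity
  constructor
  · -- c → -∞
    set A : ℝ := (0.19:ℝ) ^ (((n:ℝ)+2)/2) with hA
    have hApos : 0 < A := Real.rpow_pos_of_pos (by norm_num) _
    set m : ℕ := n - 1 with hm
    have hm0 : (m:ℝ) ≠ 0 := by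
      have : 1 ≤ m := by omega
      positivity
    set R : ℝ := (2/A) ^ ((1:ℝ)/(m:ℝ)) with hR
    have hRpos : 0 < R := Real.rpow_pos_of_pos (by positivity) _
    have hRm : R ^ m = 2/A := by
      rw [hR, ← Real.rpow_natCast ((2/A) ^ ((1:ℝ)/(m:ℝ))) m, ← Real.rpow_mul (by positivity),
        one_div, inv_mul_cancel₀ hm0, Real.rpow_one]
    have hMtend : Tendsto (fun c : ℝ => (1-c) ^ ((1:ℝ)/(n:ℝ))) atBot atTop := by
      apply (tendsto_rpow_atTop (by positivity : (0:ℝ) < (1:ℝ)/(n:ℝ))).comp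
      have h1 : Tendsto (fun c : ℝ => -c) atBot atTop := tendsto_neg_atBot_atTop
      have h2 := tendsto_atTop_add_const_left atBot (1:ℝ) h1
      exact h2.congr (fun c => by show (1:ℝ) + -c = 1 - c; ring)
    rw [tendsto_atBot]
    intro b
    have hev1 : ∀ᶠ c : ℝ in atBot, max R (max 2 (1 - b)) ≤ (1-c) ^ ((1:ℝ)/(n:ℝ)) :=
      hMtend.eventually_ge_atTop _
    filter_upwards [hev1, eventually_lt_atBot (1:ℝ)] with c hMc hc1
    set M : ℝ := (1-c) ^ ((1:ℝ)/(n:ℝ)) with hMdef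
    have hM2 : (2:ℝ) ≤ M := le_trans (le_trans (le_max_left 2 (1-b)) (le_max_right _ _)) hMc
    have hMR : R ≤ M := le_trans (le_max_left _ _) hMc
    have hMb : 1 - b ≤ M := le_trans (le_trans (le_max_right 2 (1-b)) (le_max_right _ _)) hMc
    have hMA : (2:ℝ) ≤ M ^ m * A := by
      have h1 : R ^ m ≤ M ^ m := pow_le_pow_left₀ hRpos.le hMR m
      rw [hRm] at h1
      calc (2:ℝ) = 2/A * A := by field_simp
        _ ≤ M ^ m * A := by apply mul_le_mul_of_nonneg_right h1 hApos.le
    have := part1 n hn c hc1 (F c) (hF c hc1) (lam c) (hlam c hc1) hM2 hMA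
    linarith
  · -- c → 1⁻
    have hL : Tendsto (fun c : ℝ => -(1/2) * Real.log ((1-c) ^ ((1:ℝ)/(n:ℝ))) - 1)
        (𝓝[<] (1:ℝ)) atTop := by
      apply tendsto_atTop_add_const_right
      rw [tendsto_const_mul_atTop_of_neg (by norm_num : -(1/2:ℝ) < 0)]
      apply Real.tendsto_log_nhdsGT_zero.comp
      have h0 : Tendsto (fun c : ℝ => 1 - c) (𝓝[<] (1:ℝ)) (𝓝[>] (0:ℝ)) := by
        apply tendsto_nhdsWithin_of_tendsto_nhds_of_eventually_within
        · have : Tendsto (fun c : ℝ => 1 - c) (𝓝 (1:ℝ)) (𝓝 (1 - 1)) :=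
            (continuous_const.sub continuous_id).tendsto 1
          rw [show (1:ℝ) - 1 = 0 by norm_num] at this
          exact this.mono_left nhdsWithin_le_nhds
        · filter_upwards [self_mem_nhdsWithin] with c hc
          simp only [Set.mem_Iio] at hc
          exact Set.mem_Ioi.2 (by linarith)
      have h1 : Tendsto (fun x : ℝ => x ^ ((1:ℝ)/(n:ℝ))) (𝓝[>] (0:ℝ)) (𝓝[>] (0:ℝ)) := by
        apply tendsto_nhdsWithin_of_tendsto_nhds_of_eventually_within
        · have hca : ContinuousAt (fun x : ℝ => x ^ ((1:ℝ)/(n:ℝ))) 0 :=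
            Real.continuousAt_rpow_const 0 _ (Or.inr (by positivity))
          have := hca.tendsto
          rw [Real.zero_rpow (by positivity : (1:ℝ)/(n:ℝ) ≠ 0)] at this
          exact this.mono_left nhdsWithin_le_nhds
        · filter_upwards [self_mem_nhdsWithin] with x hx
          exact Set.mem_Ioi.2 (Real.rpow_pos_of_pos hx _)
      exact h1.comp h0
    apply tendsto_atTop_mono' _ _ hL
    filter_upwards [Ioo_mem_nhdsLT_of_mem (show (1:ℝ) ∈ Set.Ioc 0 1 by norm_num)] with c hc
    exact part2 n hn c hc.1 hc.2 (F c) (hF c hc.2) (lam c) (hlam c hc.2)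
end
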